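/- In the canonical model of Λ, ⊙[α]φ ∈ w if and only if [α]φ ∈ v for every v with w R_□ v and Σ_α^w ⊆ v. -/

import Mathlib

/-- Formulas of the language `L_KO`, with operators `□`, `[α]`, `K_α`,
`⊙[α]` (objective ought) and `⊙_S[α]` (subjective ought). -/
inductive Form (Ags : Type) : Type
  | atom : Nat → Form Ags
  | bot  : Form Ags
  | imp  : Form Ags → Form Ags → Form Ags
  | box  : Form Ags → Form Ags
  | act  : Ags → Form Ags → Form Ags
  | know : Ags → Form Ags → Form Ags
  | obj  : Ags → Form Ags → Form Ags
  | subj : Ags → Form Ags → Form Ags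

namespace Form

variable {Ags : Type}

def neg (φ : Form Ags) : Form Ags := imp φ bot
def dia (φ : Form Ags) : Form Ags := neg (box (neg φ))
def conj (φ ψ : Form Ags) : Form Ags := neg (imp φ (neg ψ))
def disj (φ ψ : Form Ags) : Form Ags := imp (neg φ) ψ
def conjl : List (Form Ags) → Form Ags
  | [] => neg bot
  | φ :: l => conj φ (conjl l)

end Form

open Form

/-- The Hilbert-style proof system `Λ`. -/
inductive Prov {Ags : Type} : Form Ags → Prop
  | pl1 (φ ψ : Form Ags) : Prov (imp φ (imp ψ φ))
  | pl2 (φ ψ χ : Form Ags) :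
      Prov (imp (imp φ (imp ψ χ)) (imp (imp φ ψ) (imp φ χ)))
  | pl3 (φ ψ : Form Ags) : Prov (imp (imp (neg φ) (neg ψ)) (imp ψ φ))
  | mp {φ ψ : Form Ags} : Prov (imp φ ψ) → Prov φ → Prov ψ
  -- S5 axioms and necessitation for □
  | boxK (φ ψ : Form Ags) : Prov (imp (box (imp φ ψ)) (imp (box φ) (box ψ)))
  | boxT (φ : Form Ags) : Prov (imp (box φ) φ)
  | box4 (φ : Form Ags) : Prov (imp (box φ) (box (box φ)))
  | box5 (φ : Form Ags) : Prov (imp (dia φ) (box (dia φ)))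
  | boxNec {φ : Form Ags} : Prov φ → Prov (box φ)
  -- S5 axioms and necessitation for [α]
  | actK (a : Ags) (φ ψ : Form Ags) :
      Prov (imp (act a (imp φ ψ)) (imp (act a φ) (act a ψ)))
  | actT (a : Ags) (φ : Form Ags) : Prov (imp (act a φ) φ)
  | act4 (a : Ags) (φ : Form Ags) : Prov (imp (act a φ) (act a (act a φ)))
  | act5 (a : Ags) (φ : Form Ags) :
      Prov (imp (neg (act a φ)) (act a (neg (act a φ))))
  | actNec {φ : Form Ags} (a : Ags) : Prov φ → Prov (act a φ)
  -- S5 axioms and necessitation for K_α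
  | knowK (a : Ags) (φ ψ : Form Ags) :
      Prov (imp (know a (imp φ ψ)) (imp (know a φ) (know a ψ)))
  | knowT (a : Ags) (φ : Form Ags) : Prov (imp (know a φ) φ)
  | know4 (a : Ags) (φ : Form Ags) : Prov (imp (know a φ) (know a (know a φ)))
  | know5 (a : Ags) (φ : Form Ags) :
      Prov (imp (neg (know a φ)) (know a (neg (know a φ))))
  | knowNec {φ : Form Ags} (a : Ags) : Prov φ → Prov (know a φ)
  -- deontic-epistemic axioms
  | a1 (a : Ags) (φ ψ : Form Ags) :
      Prov (imp (obj a (imp φ ψ)) (imp (obj a φ) (obj a ψ)))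
  | a2 (a : Ags) (φ : Form Ags) :
      Prov (imp (box φ) (conj (act a φ) (obj a φ)))
  | a3 (a : Ags) (φ : Form Ags) :
      Prov (disj (box (obj a φ)) (box (neg (obj a φ))))
  | a4 (a : Ags) (φ : Form Ags) : Prov (imp (obj a φ) (obj a (act a φ)))
  | oic (a : Ags) (φ : Form Ags) : Prov (imp (obj a φ) (dia (act a φ)))
  | ia (l : List (Ags × Form Ags)) (h : l.Pairwise fun p q => p.1 ≠ q.1) :
      Prov (imp (conjl (l.map fun p => dia (act p.1 p.2)))
                (dia (conjl (l.map fun p => act p.1 p.2))))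
  | a5 (a : Ags) (φ ψ : Form Ags) :
      Prov (imp (subj a (imp φ ψ)) (imp (subj a φ) (subj a ψ)))
  | a6 (a : Ags) (φ : Form Ags) : Prov (imp (subj a φ) (subj a (know a φ)))
  | oacAx (a : Ags) (φ : Form Ags) : Prov (imp (know a φ) (act a φ))
  | unifH (a : Ags) (φ : Form Ags) :
      Prov (imp (dia (know a φ)) (know a (dia φ)))
  | sN (a : Ags) (φ : Form Ags) : Prov (imp (know a (box φ)) (subj a φ))
  | sOic (a : Ags) (φ : Form Ags) : Prov (imp (subj a φ) (dia (know a φ)))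
  | clAx (a : Ags) (φ : Form Ags) :
      Prov (imp (subj a φ) (know a (box (subj a φ))))
  | objNec {φ : Form Ags} (a : Ags) : Prov φ → Prov (obj a φ)
  | subjNec {φ : Form Ags} (a : Ags) : Prov φ → Prov (subj a φ)

/-- `Λ`-consistency of a set of formulas. -/
def Consistent {Ags : Type} (Γ : Set (Form Ags)) : Prop :=
  ¬ ∃ l : List (Form Ags), (∀ φ ∈ l, φ ∈ Γ) ∧ Prov (imp (conjl l) bot)

/-- Maximal `Λ`-consistent set. -/
def MCS {Ags : Type} (w : Set (Form Ags)) : Prop :=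
  Consistent w ∧ ∀ φ : Form Ags, φ ∈ w ∨ neg φ ∈ w

/-- Canonical relation for `□`. -/
def RboxC {Ags : Type} (w v : Set (Form Ags)) : Prop :=
  ∀ φ : Form Ags, box φ ∈ w → φ ∈ v

/-- Canonical relation for `[α]`. -/
def RactC {Ags : Type} (a : Ags) (w v : Set (Form Ags)) : Prop :=
  ∀ φ : Form Ags, act a φ ∈ w → φ ∈ v

/-- Canonical relation for `K_α`. -/
def RknowC {Ags : Type} (a : Ags) (w v : Set (Form Ags)) : Prop :=
  ∀ φ : Form Ags, know a φ ∈ w → φ ∈ v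

/-- `Σ_α^w = {[α]φ : ⊙[α]φ ∈ w}`. -/
def SigmaSet {Ags : Type} (a : Ags) (w : Set (Form Ags)) : Set (Form Ags) :=
  {ψ | ∃ φ, ψ = act a φ ∧ obj a φ ∈ w}

/-- `Γ_α^w = {K_αφ : ⊙_S[α]φ ∈ w}`. -/
def GammaSet {Ags : Type} (a : Ags) (w : Set (Form Ags)) : Set (Form Ags) :=
  {ψ | ∃ φ, ψ = know a φ ∧ subj a φ ∈ w}

/-- `v ∈ α_k[w]`: the canonical relation of the composite operator `K_α□`. -/
def alphak {Ags : Type} (a : Ags) (w v : Set (Form Ags)) : Prop :=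
  ∀ φ : Form Ags, know a (box φ) ∈ w → φ ∈ v

namespace Form
variable {Ags : Type}

open Prov

/-! ### Propositional toolkit -/

theorem prov_id (φ : Form Ags) : Prov (imp φ φ) :=
  mp (mp (pl2 φ (imp φ φ) φ) (pl1 φ (imp φ φ))) (pl1 φ φ)

theorem imp_trans {φ ψ χ : Form Ags} (h1 : Prov (imp φ ψ)) (h2 : Prov (imp ψ χ)) :
    Prov (imp φ χ) :=
  mp (mp (pl2 φ ψ χ) (mp (pl1 _ _) h2)) h1

theorem prov_swap {φ ψ χ : Form Ags} (h : Prov (imp φ (imp ψ χ))) :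
    Prov (imp ψ (imp φ χ)) :=
  imp_trans (pl1 ψ φ) (mp (pl2 φ ψ χ) h)

theorem prov_b (φ ψ χ : Form Ags) :
    Prov (imp (imp ψ χ) (imp (imp φ ψ) (imp φ χ))) :=
  imp_trans (pl1 (imp ψ χ) φ) (pl2 φ ψ χ)

/-- from `⊢ x→(y→z)` and `⊢ z→w` infer `⊢ x→(y→w)` -/
theorem comp2 {x y z w : Form Ags} (h : Prov (imp x (imp y z))) (h2 : Prov (imp z w)) :
    Prov (imp x (imp y w)) :=
  imp_trans h (mp (prov_b y z w) h2)

theorem prov_c (x y z : Form Ags) :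
    Prov (imp (imp x (imp y z)) (imp y (imp x z))) := by
  have h3 : Prov (imp (imp x (imp y z)) (imp (imp y (imp x y)) (imp y (imp x z)))) :=
    imp_trans (pl2 x y z) (prov_b y (imp x y) (imp x z))
  exact mp (prov_swap h3) (pl1 y x)

theorem prov_ap (a b : Form Ags) : Prov (imp a (imp (imp a b) b)) :=
  prov_swap (prov_id (imp a b))

theorem prov_dni (a : Form Ags) : Prov (imp a (neg (neg a))) :=
  prov_ap a bot

theorem prov_dne (a : Form Ags) : Prov (imp (neg (neg a)) a) :=
  mp (pl3 a (neg (neg a))) (prov_dni (neg a))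

theorem prov_efq (a : Form Ags) : Prov (imp bot a) :=
  mp (pl3 a bot) (mp (pl1 (neg bot) (neg a)) (prov_id bot))

theorem prov_imp_of (a b : Form Ags) (h : Prov b) : Prov (imp a b) :=
  mp (pl1 b a) h

theorem and_intro (a b : Form Ags) : Prov (imp a (imp b (conj a b))) :=
  imp_trans (prov_swap (prov_id (imp a (imp b bot)))) (prov_c (imp a (imp b bot)) b bot)

theorem and_elim_r (a b : Form Ags) : Prov (imp (conj a b) b) :=
  mp (pl3 b (neg (imp a (neg b))))
    (imp_trans (pl1 (neg b) a) (prov_dni (imp a (neg b))))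

theorem and_elim_l (a b : Form Ags) : Prov (imp (conj a b) a) := by
  have h1 : Prov (imp (neg a) (imp a bot)) := prov_swap (prov_ap a bot)
  have h2 : Prov (imp (neg a) (imp a (neg b))) := comp2 h1 (prov_efq (neg b))
  exact mp (pl3 a (neg (imp a (neg b)))) (imp_trans h2 (prov_dni (imp a (neg b))))

theorem imp_mp {x b c : Form Ags} (h : Prov (imp x (imp b c))) (h2 : Prov (imp x b)) :
    Prov (imp x c) :=
  mp (mp (pl2 x b c) h) h2

theorem imp_and_intro {x a b : Form Ags} (h1 : Prov (imp x a)) (h2 : Prov (imp x b)) :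
    Prov (imp x (conj a b)) :=
  imp_mp (imp_trans h1 (and_intro a b)) h2

/-! ### conjl lemmas -/

theorem conjl_mem {l : List (Form Ags)} {φ : Form Ags} (h : φ ∈ l) :
    Prov (imp (conjl l) φ) := by
  induction l with
  | nil => cases h
  | cons x l ih =>
    rcases List.mem_cons.1 h with rfl | h
    · exact and_elim_l _ (conjl l)
    · exact imp_trans (and_elim_r x (conjl l)) (ih h)

theorem conjl_of_forall {X : Form Ags} {l : List (Form Ags)}
    (h : ∀ ψ ∈ l, Prov (imp X ψ)) : Prov (imp X (conjl l)) := by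
  induction l with
  | nil => exact prov_imp_of X (neg bot) (prov_id bot)
  | cons x l ih =>
    exact imp_and_intro (h x List.mem_cons_self)
      (ih fun ψ hψ => h ψ (List.mem_cons_of_mem x hψ))

theorem conjl_sub {l₁ l₂ : List (Form Ags)} (h : ∀ ψ ∈ l₁, ψ ∈ l₂) :
    Prov (imp (conjl l₂) (conjl l₁)) :=
  conjl_of_forall fun ψ hψ => conjl_mem (h ψ hψ)

/-! ### Provability from a set -/

def Pf (Γ : Set (Form Ags)) (φ : Form Ags) : Prop :=
  ∃ l : List (Form Ags), (∀ ψ ∈ l, ψ ∈ Γ) ∧ Prov (imp (conjl l) φ)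

theorem consistent_iff {Γ : Set (Form Ags)} : Consistent Γ ↔ ¬ Pf Γ bot := Iff.rfl

theorem pf_of_prov {Γ : Set (Form Ags)} {φ : Form Ags} (h : Prov φ) : Pf Γ φ :=
  ⟨[], by simp, prov_imp_of _ _ h⟩

theorem pf_mem {Γ : Set (Form Ags)} {φ : Form Ags} (h : φ ∈ Γ) : Pf Γ φ :=
  ⟨[φ], by simpa using h, and_elim_l φ (conjl [])⟩

theorem pf_mp {Γ : Set (Form Ags)} {φ ψ : Form Ags}
    (h1 : Pf Γ (imp φ ψ)) (h2 : Pf Γ φ) : Pf Γ ψ := by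
  obtain ⟨l₁, hl₁, hp₁⟩ := h1
  obtain ⟨l₂, hl₂, hp₂⟩ := h2
  refine ⟨l₁ ++ l₂, ?_, ?_⟩
  · intro x hx; rcases List.mem_append.1 hx with h | h
    · exact hl₁ x h
    · exact hl₂ x h
  · have e₁ : Prov (imp (conjl (l₁ ++ l₂)) (imp φ ψ)) :=
      imp_trans (conjl_sub fun x hx => List.mem_append.2 (Or.inl hx)) hp₁
    have e₂ : Prov (imp (conjl (l₁ ++ l₂)) φ) :=
      imp_trans (conjl_sub fun x hx => List.mem_append.2 (Or.inr hx)) hp₂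
    exact imp_mp e₁ e₂

theorem pf_mono {Γ Δ : Set (Form Ags)} (h : Γ ⊆ Δ) {φ : Form Ags} (hp : Pf Γ φ) : Pf Δ φ := by
  obtain ⟨l, hl, hpr⟩ := hp
  exact ⟨l, fun ψ hψ => h (hl ψ hψ), hpr⟩

theorem pf_insert {Γ : Set (Form Ags)} {φ ψ : Form Ags}
    (h : Pf (insert φ Γ) ψ) : Pf Γ (imp φ ψ) := by
  classical
  obtain ⟨l, hl, hpr⟩ := h
  refine ⟨l.filter (fun x => x ≠ φ), ?_, ?_⟩
  · intro x hx
    have hx' := List.mem_filter.1 hx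
    have : x ∈ insert φ Γ := hl x hx'.1
    rcases this with h' | h'
    · exact absurd h' (by simpa using hx'.2)
    · exact h'
  · set X := conjl (l.filter (fun x => x ≠ φ)) with hX
    have hbig : Prov (imp (conj φ X) (conjl l)) := by
      apply conjl_of_forall
      intro x hx
      by_cases hxφ : x = φ
      · subst hxφ; exact and_elim_l _ X
      · refine imp_trans (and_elim_r φ X) (conjl_mem ?_)
        exact List.mem_filter.2 ⟨hx, by simpa using hxφ⟩
    have h1 : Prov (imp (conj φ X) ψ) := imp_trans hbig hpr
    have h2 : Prov (imp φ (imp X ψ)) := comp2 (and_intro φ X) h1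
    exact prov_swap h2

/-! ### Lindenbaum -/

theorem lindenbaum {Γ : Set (Form Ags)} (h : Consistent Γ) :
    ∃ w, MCS w ∧ Γ ⊆ w := by
  have hchainub : ∀ c ⊆ {Δ : Set (Form Ags) | Consistent Δ}, IsChain (· ⊆ ·) c →
      c.Nonempty → ∃ ub ∈ {Δ : Set (Form Ags) | Consistent Δ}, ∀ s ∈ c, s ⊆ ub := by
    intro c hcS hchain hcne
    refine ⟨⋃₀ c, ?_, fun s hs => Set.subset_sUnion_of_mem hs⟩
    intro ⟨l, hl, hpr⟩
    have key : ∀ l : List (Form Ags), (∀ ψ ∈ l, ψ ∈ ⋃₀ c) → ∃ t ∈ c, ∀ ψ ∈ l, ψ ∈ t := by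
      intro l
      induction l with
      | nil => intro _; obtain ⟨t, ht⟩ := hcne; exact ⟨t, ht, by simp⟩
      | cons x l ih =>
        intro hmem
        obtain ⟨t₂, ht₂c, ht₂⟩ := ih fun ψ hψ => hmem ψ (List.mem_cons_of_mem x hψ)
        obtain ⟨t₁, ht₁c, hxt₁⟩ := hmem x List.mem_cons_self
        rcases eq_or_ne t₁ t₂ with rfl | hne
        · exact ⟨t₁, ht₁c, fun ψ hψ => by
            rcases List.mem_cons.1 hψ with rfl | h
            · exact hxt₁
            · exact ht₂ ψ h⟩
        · rcases hchain ht₁c ht₂c hne with hsub | hsub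
          · exact ⟨t₂, ht₂c, fun ψ hψ => by
              rcases List.mem_cons.1 hψ with rfl | h
              · exact hsub hxt₁
              · exact ht₂ ψ h⟩
          · exact ⟨t₁, ht₁c, fun ψ hψ => by
              rcases List.mem_cons.1 hψ with rfl | h
              · exact hxt₁
              · exact hsub (ht₂ ψ h)⟩
    obtain ⟨t, htc, ht⟩ := key l hl
    exact hcS htc ⟨l, ht, hpr⟩
  obtain ⟨m, hΓm, hmS, hmax⟩ :=
    zorn_subset_nonempty {Δ : Set (Form Ags) | Consistent Δ} hchainub Γ h
  refine ⟨m, ⟨hmS, ?_⟩, hΓm⟩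
  intro φ
  by_contra hcon
  push_neg at hcon
  have hφ1 : ¬ Consistent (insert φ m) := by
    intro hc
    have := hmax hc (Set.subset_insert _ _)
    exact hcon.1 (this (Set.mem_insert φ m))
  have hφ2 : ¬ Consistent (insert (neg φ) m) := by
    intro hc
    have := hmax hc (Set.subset_insert _ _)
    exact hcon.2 (this (Set.mem_insert _ m))
  rw [consistent_iff, not_not] at hφ1 hφ2
  have p1 : Pf m (neg φ) := pf_insert hφ1
  have p2 : Pf m (neg (neg φ)) := pf_insert hφ2
  exact hmS (pf_mp p2 p1)

/-! ### MCS facts -/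

theorem mcs_pf {w : Set (Form Ags)} (hw : MCS w) {φ : Form Ags} (h : Pf w φ) : φ ∈ w := by
  rcases hw.2 φ with hφ | hφ
  · exact hφ
  · exact absurd (pf_mp (pf_mem hφ) h) hw.1

theorem mcs_prov {w : Set (Form Ags)} (hw : MCS w) {φ : Form Ags} (h : Prov φ) : φ ∈ w :=
  mcs_pf hw (pf_of_prov h)

theorem mcs_mp {w : Set (Form Ags)} (hw : MCS w) {φ ψ : Form Ags}
    (h1 : imp φ ψ ∈ w) (h2 : φ ∈ w) : ψ ∈ w :=
  mcs_pf hw (pf_mp (pf_mem h1) (pf_mem h2))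

theorem mcs_imp {w : Set (Form Ags)} (hw : MCS w) {φ ψ : Form Ags}
    (h1 : Prov (imp φ ψ)) (h2 : φ ∈ w) : ψ ∈ w :=
  mcs_pf hw (pf_mp (pf_of_prov h1) (pf_mem h2))

theorem mcs_not_both {w : Set (Form Ags)} (hw : MCS w) {φ : Form Ags}
    (h1 : φ ∈ w) (h2 : neg φ ∈ w) : False :=
  hw.1 (pf_mp (pf_mem h2) (pf_mem h1))

/-! ### Modal helper lemmas -/

theorem obj_k {a : Ags} {φ ψ : Form Ags} (h : Prov (imp φ ψ)) :
    Prov (imp (obj a φ) (obj a ψ)) :=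
  mp (Prov.a1 a φ ψ) (Prov.objNec a h)

theorem box_to_obj (a : Ags) (φ : Form Ags) : Prov (imp (box φ) (obj a φ)) :=
  imp_trans (Prov.a2 a φ) (and_elim_r (act a φ) (obj a φ))

theorem mcs_obj_conj {w : Set (Form Ags)} (hw : MCS w) {a : Ags} {φ ψ : Form Ags}
    (h1 : obj a φ ∈ w) (h2 : obj a ψ ∈ w) : obj a (conj φ ψ) ∈ w := by
  have s1 : obj a (imp ψ (conj φ ψ)) ∈ w := mcs_imp hw (obj_k (and_intro φ ψ)) h1
  exact mcs_mp hw (mcs_imp hw (Prov.a1 a ψ (conj φ ψ)) s1) h2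

theorem mcs_obj_conjl {w : Set (Form Ags)} (hw : MCS w) {a : Ags} {l : List (Form Ags)}
    (h : ∀ ψ ∈ l, obj a ψ ∈ w) : obj a (conjl l) ∈ w := by
  induction l with
  | nil => exact mcs_prov hw (Prov.objNec a (prov_id bot))
  | cons x l ih =>
    exact mcs_obj_conj hw (h x List.mem_cons_self)
      (ih fun ψ hψ => h ψ (List.mem_cons_of_mem x hψ))

end Form


open Form in
/-- Existence lemma for the objective ought: `⊙[α]φ ∈ w` iff `[α]φ ∈ v` for
every MCS `v` with `w R_□ v` and `Σ_α^w ⊆ v`. -/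
theorem statement13 {Ags : Type} (a : Ags) (w : Set (Form Ags)) (hw : MCS w)
    (φ : Form Ags) :
    Form.obj a φ ∈ w ↔
      ∀ v, MCS v → RboxC w v → SigmaSet a w ⊆ v → Form.act a φ ∈ v := by
  constructor
  · intro h v _ _ hsig
    exact hsig ⟨φ, rfl, h⟩
  · intro hall
    by_contra hobj
    set Δ₀ : Set (Form Ags) := SigmaSet a w ∪ {ψ | Form.box ψ ∈ w} with hΔ₀
    have hcons : Consistent (insert (Form.neg (Form.act a φ)) Δ₀) := by
      intro hc
      have hpf : Pf Δ₀ (Form.act a φ) :=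
        pf_mp (pf_of_prov (prov_dne (Form.act a φ))) (pf_insert hc)
      obtain ⟨l, hl, hpr⟩ := hpf
      have hobjl : ∀ χ ∈ l, Form.obj a χ ∈ w := by
        intro χ hχ
        rcases hl χ hχ with hSig | hbx
        · obtain ⟨θ, rfl, hθ⟩ := hSig
          exact mcs_imp hw (Prov.a4 a θ) hθ
        · exact mcs_imp hw (box_to_obj a χ) hbx
      have h1 : Form.obj a (Form.conjl l) ∈ w := mcs_obj_conjl hw hobjl
      have h2 : Form.obj a (Form.act a φ) ∈ w := mcs_imp hw (obj_k hpr) h1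
      have h3 : Form.obj a φ ∈ w := mcs_imp hw (obj_k (Prov.actT a φ)) h2
      exact hobj h3
    obtain ⟨v, hv, hsub⟩ := lindenbaum hcons
    have hact : Form.act a φ ∈ v := by
      refine hall v hv ?_ ?_
      · intro ψ hψ
        exact hsub (Set.mem_insert_of_mem _ (Or.inr hψ))
      · intro ψ hψ
        exact hsub (Set.mem_insert_of_mem _ (Or.inl hψ))
    exact mcs_not_both hv hact (hsub (Set.mem_insert _ _))
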